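/- arXiv:2505.16932 — 6 statements merged into one kernel-verified Lean document; each statement's English description precedes it below -/
import Mathlib

section
/- For any fixed odd polynomial p and interval [ℓ,u] with 0 < ℓ ≤ u, the supremum over all real m×n matrices M (with m ≥ n ≥ 1) whose singular values all lie in [ℓ,u] of the spectral norm ‖polar(M) − p(M)‖₂ equals the supremum over x ∈ [ℓ,u] of |1 − p(x)|. -/
/-!
Write `M = U diag(σ) Vᵀ`. Then `polar(M) - p(M) = U diag(1 - p(σ)) Vᵀ`, and since `U` and `V` have
orthonormal columns, multiplying by `U` on the left or by `Vᵀ` on the right preserves the spectral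
norm (`‖UA‖² = ‖(UA)ᴴ(UA)‖ = ‖AᴴA‖ = ‖A‖²`). So the error is `‖diag(1 - p(σ))‖ = maxᵢ |1 - p(σᵢ)|`,
a value `|1 - p(x)|` with `x ∈ [ℓ, u]`; conversely `σ` constant equal to `x` attains it. The two
sets of values coincide, hence so do their suprema.
-/

open Matrix
open scoped Matrix.Norms.L2Operator

/-- A polynomial is odd if all monomials appearing in it have odd degree. -/
def IsOddPoly (p : Polynomial ℝ) : Prop := ∀ n : ℕ, p.coeff n ≠ 0 → Odd n

theorem exists_pi_norm_eq_norm_apply {ι E : Type*} [Fintype ι] [Nonempty ι]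
    [SeminormedAddGroup E] (f : ι → E) : ∃ i, ‖f‖ = ‖f i‖ := by
  obtain ⟨i, -, hi⟩ := Finset.univ.exists_mem_eq_sup Finset.univ_nonempty fun i => ‖f i‖₊
  exact ⟨i, by rw [Pi.norm_def, hi, coe_nnnorm]⟩

namespace Matrix

theorem transpose_submatrix_one_mul_submatrix_one {R m n : Type*} [Fintype m] [DecidableEq m]
    [DecidableEq n] [NonAssocSemiring R] (e : n ↪ m) :
    ((1 : Matrix m m R).submatrix id e)ᵀ * (1 : Matrix m m R).submatrix id e = 1 := by
  rw [transpose_submatrix, transpose_one, ← submatrix_mul _ _ _ _ _ Function.bijective_id,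
    Matrix.one_mul, submatrix_one_embedding]

variable {𝕜 l m n : Type*} [RCLike 𝕜] [Fintype l] [Fintype m] [Fintype n]
  [DecidableEq l] [DecidableEq n]

theorem l2_opNorm_mul_of_conjTranspose_mul_self_eq_one {U : Matrix m n 𝕜}
    (hU : Uᴴ * U = 1) (A : Matrix n l 𝕜) : ‖U * A‖ = ‖A‖ := by
  have h : ‖U * A‖ * ‖U * A‖ = ‖A‖ * ‖A‖ := by
    rw [← l2_opNorm_conjTranspose_mul_self, ← l2_opNorm_conjTranspose_mul_self,
      conjTranspose_mul, Matrix.mul_assoc, ← Matrix.mul_assoc Uᴴ, hU, Matrix.one_mul]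
  exact (mul_self_inj (norm_nonneg _) (norm_nonneg _)).mp h

theorem l2_opNorm_mul_conjTranspose_of_conjTranspose_mul_self_eq_one [DecidableEq m]
    {V : Matrix l n 𝕜} (hV : Vᴴ * V = 1) (A : Matrix m n 𝕜) : ‖A * Vᴴ‖ = ‖A‖ := by
  rw [← l2_opNorm_conjTranspose, conjTranspose_mul, conjTranspose_conjTranspose,
    l2_opNorm_mul_of_conjTranspose_mul_self_eq_one hV, l2_opNorm_conjTranspose]

theorem l2_opNorm_mul_transpose_sub_mul_diagonal_mul_transpose [DecidableEq m]
    {U : Matrix m n ℝ} {V : Matrix l n ℝ} (hU : Uᵀ * U = 1) (hV : Vᵀ * V = 1) (d : n → ℝ) :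
    ‖U * Vᵀ - U * diagonal d * Vᵀ‖ = ‖fun i => 1 - d i‖ := by
  rw [← conjTranspose_eq_transpose_of_trivial] at hU hV ⊢
  have hfactor : U * Vᴴ - U * diagonal d * Vᴴ = U * (1 - diagonal d) * Vᴴ := by
    rw [Matrix.mul_sub, Matrix.sub_mul, Matrix.mul_one]
  rw [hfactor, l2_opNorm_mul_conjTranspose_of_conjTranspose_mul_self_eq_one hV,
    l2_opNorm_mul_of_conjTranspose_mul_self_eq_one hU, ← diagonal_one,
    diagonal_sub, l2_opNorm_diagonal]

end Matrix

theorem stmt_2_general (p : Polynomial ℝ)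
    (ℓ u : ℝ)
    (m n : ℕ) (hn : 1 ≤ n) (hmn : n ≤ m) :
    sSup {e : ℝ | ∃ (U : Matrix (Fin m) (Fin n) ℝ) (V : Matrix (Fin n) (Fin n) ℝ)
        (σ : Fin n → ℝ), Uᵀ * U = 1 ∧ Vᵀ * V = 1 ∧ (∀ i, σ i ∈ Set.Icc ℓ u) ∧
        e = ‖U * Vᵀ - U * Matrix.diagonal (fun i => p.eval (σ i)) * Vᵀ‖}
      = sSup ((fun x => |1 - p.eval x|) '' Set.Icc ℓ u) := by
  have : Nonempty (Fin n) := ⟨⟨0, hn⟩⟩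
  congr 1
  ext e
  constructor
  · rintro ⟨U, V, σ, hU, hV, hσ, rfl⟩
    obtain ⟨i, hi⟩ := exists_pi_norm_eq_norm_apply fun i => 1 - p.eval (σ i)
    rw [l2_opNorm_mul_transpose_sub_mul_diagonal_mul_transpose hU hV, hi, Real.norm_eq_abs]
    exact ⟨σ i, hσ i, rfl⟩
  · rintro ⟨x, hx, rfl⟩
    refine ⟨_, 1, fun _ => x, transpose_submatrix_one_mul_submatrix_one (Fin.castLEEmb hmn),
      by simp, fun _ => hx, ?_⟩
    rw [l2_opNorm_mul_transpose_sub_mul_diagonal_mul_transpose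
      (transpose_submatrix_one_mul_submatrix_one _) (by simp), pi_norm_const, Real.norm_eq_abs]

theorem stmt_2 (p : Polynomial ℝ) (hodd : IsOddPoly p)
    (ℓ u : ℝ) (hℓ : 0 < ℓ) (hlu : ℓ ≤ u)
    (m n : ℕ) (hn : 1 ≤ n) (hmn : n ≤ m) :
    sSup {e : ℝ | ∃ (U : Matrix (Fin m) (Fin n) ℝ) (V : Matrix (Fin n) (Fin n) ℝ)
        (σ : Fin n → ℝ), Uᵀ * U = 1 ∧ Vᵀ * V = 1 ∧ (∀ i, σ i ∈ Set.Icc ℓ u) ∧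
        e = ‖U * Vᵀ - U * Matrix.diagonal (fun i => p.eval (σ i)) * Vᵀ‖}
      = sSup ((fun x => |1 - p.eval x|) '' Set.Icc ℓ u) :=
  stmt_2_general p ℓ u m n hn hmn
end

section
/- Define p₁,...,p_T greedily: p_t is the best uniform approximation to 1 on [ℓ_t, u_t] among odd polynomials of degree ≤ d, with ℓ₁ = ℓ, u₁ = u, ℓ_{t+1} = min_{x∈[ℓ_t,u_t]} p_t(x), u_{t+1} = max_{x∈[ℓ_t,u_t]} p_t(x). Then the composition p* = p_T ∘ ... ∘ p₁ minimizes max_{x∈[ℓ,u]} |1 − p(x)| over all compositions p = q_T ∘ ... ∘ q₁ of odd polynomials q_t of degree ≤ d, and the minimal error equals 1 − ℓ_{T+1}. -/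
/-- Uniform (sup-norm) error of `p` as an approximation of the constant `1` on `[ℓ, u]`. -/
noncomputable def uniformErr (ℓ u : ℝ) (p : Polynomial ℝ) : ℝ :=
  sSup ((fun x => |1 - p.eval x|) '' Set.Icc ℓ u)

/-- Evaluation of the composition `p_{t-1} ∘ ⋯ ∘ p_0` at `x`. -/
noncomputable def polyCompEval (p : ℕ → Polynomial ℝ) : ℕ → ℝ → ℝ
  | 0, x => x
  | (t + 1), x => (p t).eval (polyCompEval p t x)

/-!
A best approximation `p` on `[ℓ, u]` (with `0 < ℓ`) has range `[m, 2 - m]` and error `1 - m`: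
rescaling its output by `2 / (m + M)` would otherwise lower the error. Since the class is stable
under `q ↦ c • q (s • x)`, no competitor maps a dilate `s • [ℓ, u]` into a dilate
`c • (m, 2 - m)`, as that would give a better approximation. So if the image of `[ℓ, u]` under
`q_t ∘ ⋯ ∘ q_1` contains a dilate of `[ℓ_t, u_t]` (the dilate by `0` meaning that it contains `0`),
then its image under `q_{t+1}` contains an interval fitting in no dilate of `(ℓ_{t+1}, u_{t+1})`,
hence a dilate of `[ℓ_{t+1}, u_{t+1}]`. Every dilate of `[ℓ_T, 2 - ℓ_T]` has a point at distance at
least `1 - ℓ_T` from `1`, and the greedy composition maps `[ℓ, u]` onto `[ℓ_T, 2 - ℓ_T]` exactly.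
-/

open Polynomial Set

structure DilationClosed (𝒜 : Set ℝ[X]) : Prop where
  X_mem : X ∈ 𝒜
  C_mul_mem : ∀ (c : ℝ) {q : ℝ[X]}, q ∈ 𝒜 → C c * q ∈ 𝒜
  comp_C_mul_X_mem : ∀ (s : ℝ) {q : ℝ[X]}, q ∈ 𝒜 → q.comp (C s * X) ∈ 𝒜

def oddPolys (d : ℕ) : Set ℝ[X] := {q | IsOddPoly q ∧ q.natDegree ≤ d}

theorem dilationClosed_oddPolys {d : ℕ} (hd : 1 ≤ d) : DilationClosed (oddPolys d) where
  X_mem := ⟨fun n hn => by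
    rw [coeff_X] at hn
    split_ifs at hn with h
    exacts [h ▸ odd_one, absurd rfl hn], natDegree_X_le.trans hd⟩
  C_mul_mem c q hq := ⟨fun n hn => hq.1 n (right_ne_zero_of_mul (coeff_C_mul q ▸ hn)),
    (natDegree_C_mul_le c q).trans hq.2⟩
  comp_C_mul_X_mem s q hq := by
    refine ⟨fun n hn => hq.1 n (left_ne_zero_of_mul (by rwa [comp_C_mul_X_coeff] at hn)), ?_⟩
    refine natDegree_le_iff_coeff_eq_zero.2 fun n hn => ?_
    rw [comp_C_mul_X_coeff, coeff_eq_zero_of_natDegree_lt (hq.2.trans_lt hn), zero_mul]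

theorem sSup_image_abs_one_sub_Icc {m M : ℝ} (h : m ≤ M) :
    sSup ((fun y => |1 - y|) '' Icc m M) = max |1 - m| |1 - M| := by
  refine le_antisymm (csSup_le ((nonempty_Icc.2 h).image _) ?_) (max_le ?_ ?_)
  · rintro _ ⟨y, hy, rfl⟩
    rw [max_comm]
    exact abs_le_max_abs_abs (by linarith [hy.2]) (by linarith [hy.1])
  all_goals
    refine le_csSup ((isCompact_Icc.image (by fun_prop)).bddAbove) (mem_image_of_mem _ ?_)
    simp [h]

theorem sSup_image_abs_one_sub_Icc_two_sub {m : ℝ} (h : m ≤ 1) :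
    sSup ((fun y => |1 - y|) '' Icc m (2 - m)) = 1 - m := by
  rw [sSup_image_abs_one_sub_Icc (by linarith), show 1 - (2 - m) = -(1 - m) by ring, abs_neg,
    max_self, abs_of_nonneg (by linarith)]

theorem exists_le_abs_one_sub_of_mul_mem {ℓ s : ℝ} {S : Set ℝ} (h₀ : 0 ≤ ℓ)
    (h₁ : ℓ ≤ 1) (hS : ∀ x ∈ Icc ℓ (2 - ℓ), s * x ∈ S) : ∃ y ∈ S, 1 - ℓ ≤ |1 - y| := by
  rcases le_total s 1 with hs | hs
  · refine ⟨s * ℓ, hS ℓ ⟨le_rfl, by linarith⟩, le_trans ?_ (le_abs_self _)⟩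
    nlinarith
  · refine ⟨s * (2 - ℓ), hS _ ⟨by linarith, le_rfl⟩, le_trans ?_ (neg_le_abs _)⟩
    nlinarith

theorem mul_le_mul_of_forall_exists_notMem_Ioo {ℓ u m M : ℝ} (hℓ : 0 < ℓ) (hlu : ℓ ≤ u)
    (hm : 0 < m) (H : ∀ c > 0, ∃ y ∈ Icc m M, c⁻¹ * y ∉ Ioo ℓ u) : m * u ≤ ℓ * M := by
  -- Otherwise `[m, M]` lies inside `c • (ℓ, u)` for the midpoint `c` of `M / u` and `m / ℓ`.
  by_contra! hlt
  have hu : 0 < u := hℓ.trans_le hlu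
  have hMm : M / u < m / ℓ := by rw [div_lt_div_iff₀ hu hℓ]; linarith
  obtain ⟨y₀, hy₀, -⟩ := H 1 one_pos
  have hc : 0 < (M / u + m / ℓ) / 2 := by
    have := div_pos (hm.trans_le (hy₀.1.trans hy₀.2)) hu
    positivity
  obtain ⟨y, hy, hny⟩ := H _ hc
  refine hny ⟨?_, ?_⟩
  · have : (M / u + m / ℓ) / 2 < m / ℓ := by linarith
    rw [lt_div_iff₀ hℓ] at this
    rw [lt_inv_mul_iff₀ hc]
    linarith [hy.1]
  · have : M / u < (M / u + m / ℓ) / 2 := by linarith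
    rw [div_lt_iff₀ hu] at this
    rw [inv_mul_lt_iff₀ hc]
    linarith [hy.2]

theorem exists_mul_mem_Icc_of_forall_exists_notMem_Ioo {ℓ u m M : ℝ} (hℓ : 0 < ℓ)
    (hlu : ℓ ≤ u) (H : ∀ c ≠ 0, ∃ y ∈ Icc m M, c⁻¹ * y ∉ Ioo ℓ u) :
    ∃ s, ∀ x ∈ Icc ℓ u, s * x ∈ Icc m M := by
  by_cases h0 : (0 : ℝ) ∈ Icc m M
  · exact ⟨0, fun x _ => by simpa using h0⟩
  -- Reflecting `[m, M]` through `0` reduces the case `M < 0` to the case `0 < m`.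
  wlog hm : 0 < m generalizing m M
  · have hM : M < 0 := lt_of_not_ge fun hM => h0 ⟨not_lt.1 hm, hM⟩
    have H' : ∀ c ≠ 0, ∃ y ∈ Icc (-M) (-m), c⁻¹ * y ∉ Ioo ℓ u := fun c hc => by
      obtain ⟨y, hy, hny⟩ := H (-c) (neg_ne_zero.2 hc)
      refine ⟨-y, ⟨by linarith [hy.2], by linarith [hy.1]⟩, ?_⟩
      rwa [inv_neg, neg_mul, ← mul_neg] at hny
    obtain ⟨s, hs⟩ := this H' (fun h => h0 ⟨by linarith [h.2], by linarith [h.1]⟩) (by linarith)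
    refine ⟨-s, fun x hx => ?_⟩
    have := hs x hx
    exact ⟨by linarith [this.2], by linarith [this.1]⟩
  have hmu := mul_le_mul_of_forall_exists_notMem_Ioo hℓ hlu hm fun c hc => H c hc.ne'
  refine ⟨m / ℓ, fun x hx => ⟨?_, ?_⟩⟩
  · calc m = m / ℓ * ℓ := by field_simp
      _ ≤ m / ℓ * x := by gcongr; exact hx.1
  · calc m / ℓ * x ≤ m / ℓ * u := by gcongr; exact hx.2
      _ ≤ M := by rw [div_mul_eq_mul_div, div_le_iff₀ hℓ]; linarith

theorem uniformErr_eq_sSup_image {ℓ u : ℝ} (q : ℝ[X]) :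
    uniformErr ℓ u q = sSup ((fun y => |1 - y|) '' ((fun x => q.eval x) '' Icc ℓ u)) := by
  rw [uniformErr, image_image]

theorem image_eval_Icc (q : ℝ[X]) {a b : ℝ} (h : a ≤ b) :
    (fun x => q.eval x) '' Icc a b
      = Icc (sInf ((fun x => q.eval x) '' Icc a b)) (sSup ((fun x => q.eval x) '' Icc a b)) :=
  ContinuousOn.image_Icc h q.continuous.continuousOn

theorem uniformErr_of_image_eq {ℓ u m M : ℝ} {q : ℝ[X]} (hmM : m ≤ M)
    (himg : (fun x => q.eval x) '' Icc ℓ u = Icc m M) :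
    uniformErr ℓ u q = max |1 - m| |1 - M| := by
  rw [uniformErr_eq_sSup_image, himg, sSup_image_abs_one_sub_Icc hmM]

theorem uniformErr_C_mul_of_image_eq {ℓ u m M c : ℝ} {q : ℝ[X]} (hc : 0 ≤ c) (hmM : m ≤ M)
    (himg : (fun x => q.eval x) '' Icc ℓ u = Icc m M) :
    uniformErr ℓ u (C c * q) = max |1 - c * m| |1 - c * M| := by
  refine uniformErr_of_image_eq (by gcongr) ?_
  simp only [eval_mul, eval_C]
  rw [← image_image (c * ·), himg, image_mul_left_Icc hc hmM]

def IsBestApprox (𝒜 : Set ℝ[X]) (ℓ u : ℝ) (p : ℝ[X]) : Prop :=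
  p ∈ 𝒜 ∧ ∀ r ∈ 𝒜, uniformErr ℓ u p ≤ uniformErr ℓ u r

section BestApprox

variable {𝒜 : Set ℝ[X]} {ℓ u m M : ℝ} {p : ℝ[X]}

theorem IsBestApprox.uniformErr_lt_one (h𝒜 : DilationClosed 𝒜) (hp : IsBestApprox 𝒜 ℓ u p)
    (hℓ : 0 < ℓ) (hlu : ℓ ≤ u) : uniformErr ℓ u p < 1 := by
  have hlu₀ : 0 < ℓ + u := by linarith
  have hX : (fun x => (X : ℝ[X]).eval x) '' Icc ℓ u = Icc ℓ u := by simp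
  refine (hp.2 _ (h𝒜.C_mul_mem (2 / (ℓ + u)) h𝒜.X_mem)).trans_lt ?_
  rw [uniformErr_C_mul_of_image_eq (div_pos two_pos hlu₀).le hlu hX]
  have hℓ₀ : 0 < 2 / (ℓ + u) * ℓ := by positivity
  have hu₀ : 0 < 2 / (ℓ + u) * u := mul_pos (div_pos two_pos hlu₀) (hℓ.trans_le hlu)
  have hℓ₂ : 2 / (ℓ + u) * ℓ < 2 := by rw [div_mul_eq_mul_div, div_lt_iff₀] <;> linarith
  have hu₂ : 2 / (ℓ + u) * u < 2 := by rw [div_mul_eq_mul_div, div_lt_iff₀] <;> linarith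
  exact max_lt (abs_sub_lt_iff.2 ⟨by linarith, by linarith⟩)
    (abs_sub_lt_iff.2 ⟨by linarith, by linarith⟩)

theorem IsBestApprox.pos_and_eq_two_sub (h𝒜 : DilationClosed 𝒜) (hp : IsBestApprox 𝒜 ℓ u p)
    (hℓ : 0 < ℓ) (hlu : ℓ ≤ u) (hmM : m ≤ M)
    (himg : (fun x => p.eval x) '' Icc ℓ u = Icc m M) : 0 < m ∧ M = 2 - m := by
  have herr := uniformErr_of_image_eq hmM himg
  have hlt := herr ▸ hp.uniformErr_lt_one h𝒜 hℓ hlu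
  have hm : 0 < m := by linarith [(abs_lt.1 ((le_max_left _ _).trans_lt hlt)).2]
  have hmM₀ : 0 < m + M := by linarith
  -- Rescaling by `2 / (m + M)` equalizes the errors at `m` and `M`, which forces `m + M = 2`.
  have hscaled := herr ▸ hp.2 _ (h𝒜.C_mul_mem (2 / (m + M)) hp.1)
  rw [uniformErr_C_mul_of_image_eq (div_pos two_pos hmM₀).le hmM himg] at hscaled
  have e₁ : 1 - 2 / (m + M) * m = (M - m) / (m + M) := by field_simp; ring
  have e₂ : 1 - 2 / (m + M) * M = -((M - m) / (m + M)) := by field_simp; ring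
  rw [e₁, e₂, abs_neg, max_self,
    abs_of_nonneg (div_nonneg (by linarith) hmM₀.le : 0 ≤ (M - m) / (m + M))] at hscaled
  have h₁ := (le_abs_self (1 - m)).trans ((le_max_left _ _).trans hscaled)
  have h₂ := (neg_le_abs (1 - M)).trans ((le_max_right _ _).trans hscaled)
  rw [le_div_iff₀ hmM₀] at h₁ h₂
  exact ⟨hm, by nlinarith⟩

theorem IsBestApprox.exists_eval_notMem_Ioo (h𝒜 : DilationClosed 𝒜) (hp : IsBestApprox 𝒜 ℓ u p)
    (hℓ : 0 < ℓ) (hlu : ℓ ≤ u) (hmM : m ≤ M)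
    (himg : (fun x => p.eval x) '' Icc ℓ u = Icc m M) {r : ℝ[X]} (hr : r ∈ 𝒜) :
    ∃ x ∈ Icc ℓ u, r.eval x ∉ Ioo m M := by
  obtain ⟨-, rfl⟩ := hp.pos_and_eq_two_sub h𝒜 hℓ hlu hmM himg
  have herr : 1 - m ≤ uniformErr ℓ u r := by
    rw [← sSup_image_abs_one_sub_Icc_two_sub (by linarith), ← himg, ← uniformErr_eq_sSup_image]
    exact hp.2 r hr
  obtain ⟨x, hx, hmax⟩ := (isCompact_Icc.image (by fun_prop)).sSup_mem
    ((nonempty_Icc.2 hlu).image fun x => |1 - r.eval x|)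
  refine ⟨x, hx, fun hmem => ?_⟩
  rw [uniformErr, ← hmax] at herr
  exact (abs_sub_lt_iff.2 ⟨by linarith [hmem.1], by linarith [hmem.2]⟩).not_ge herr

theorem IsBestApprox.exists_mul_mem_image (h𝒜 : DilationClosed 𝒜) (hp : IsBestApprox 𝒜 ℓ u p)
    (hℓ : 0 < ℓ) (hlu : ℓ ≤ u) (hmM : m ≤ M)
    (himg : (fun x => p.eval x) '' Icc ℓ u = Icc m M) {q : ℝ[X]} (hq : q ∈ 𝒜) {S : Set ℝ}
    {s : ℝ} (hS : ∀ x ∈ Icc ℓ u, s * x ∈ S) :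
    ∃ s', ∀ y ∈ Icc m M, s' * y ∈ (fun x => q.eval x) '' S := by
  set r := q.comp (C s * X)
  have hJ := image_eval_Icc r hlu
  have hJS : (fun x => r.eval x) '' Icc ℓ u ⊆ (fun x => q.eval x) '' S := by
    rintro _ ⟨x, hx, rfl⟩
    exact ⟨s * x, hS x hx, by simp [r]⟩
  -- `c⁻¹ • q (s • x)` competes with `p`, so `q (s • [ℓ, u])` fits in no `c • (m, M)`.
  have hnarrow : ∀ c ≠ 0, ∃ y ∈ (fun x => r.eval x) '' Icc ℓ u, c⁻¹ * y ∉ Ioo m M := by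
    intro c _
    obtain ⟨x, hx, hnot⟩ := hp.exists_eval_notMem_Ioo h𝒜 hℓ hlu hmM himg
      (h𝒜.C_mul_mem c⁻¹ (h𝒜.comp_C_mul_X_mem s hq))
    exact ⟨r.eval x, mem_image_of_mem _ hx, by simpa [r] using hnot⟩
  rw [hJ] at hnarrow
  obtain ⟨s', hs'⟩ := exists_mul_mem_Icc_of_forall_exists_notMem_Ioo
    (hp.pos_and_eq_two_sub h𝒜 hℓ hlu hmM himg).1 hmM hnarrow
  exact ⟨s', fun y hy => hJS (hJ ▸ hs' y hy)⟩

end BestApprox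

theorem continuous_polyCompEval (r : ℕ → ℝ[X]) (t : ℕ) : Continuous (polyCompEval r t) := by
  induction t with
  | zero => exact continuous_id
  | succ t ih => exact (r t).continuous.comp ih

theorem image_polyCompEval_succ (r : ℕ → ℝ[X]) (t : ℕ) (S : Set ℝ) :
    polyCompEval r (t + 1) '' S = (fun y => (r t).eval y) '' (polyCompEval r t '' S) :=
  (image_image (fun y => (r t).eval y) (polyCompEval r t) S).symm

structure IsGreedySeq (𝒜 : Set ℝ[X]) (T : ℕ) (p : ℕ → ℝ[X]) (ls us : ℕ → ℝ) : Prop where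
  pos_zero : 0 < ls 0
  le_zero : ls 0 ≤ us 0
  best : ∀ t < T, IsBestApprox 𝒜 (ls t) (us t) (p t)
  ls_succ : ∀ t < T, ls (t + 1) = sInf ((fun x => (p t).eval x) '' Icc (ls t) (us t))
  us_succ : ∀ t < T, us (t + 1) = sSup ((fun x => (p t).eval x) '' Icc (ls t) (us t))

namespace IsGreedySeq

variable {𝒜 : Set ℝ[X]} {T : ℕ} {p : ℕ → ℝ[X]} {ls us : ℕ → ℝ}

theorem le (hg : IsGreedySeq 𝒜 T p ls us) : ∀ t ≤ T, ls t ≤ us t := by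
  intro t
  induction t with
  | zero => exact fun _ => hg.le_zero
  | succ t ih =>
    intro ht
    have hle := ih (by omega)
    rw [hg.ls_succ t ht, hg.us_succ t ht, ← nonempty_Icc, ← image_eval_Icc _ hle]
    exact (nonempty_Icc.2 hle).image _

theorem image_eq (hg : IsGreedySeq 𝒜 T p ls us) {t : ℕ} (ht : t < T) :
    (fun x => (p t).eval x) '' Icc (ls t) (us t) = Icc (ls (t + 1)) (us (t + 1)) := by
  rw [hg.ls_succ t ht, hg.us_succ t ht]
  exact image_eval_Icc _ (hg.le t ht.le)

theorem pos (h𝒜 : DilationClosed 𝒜) (hg : IsGreedySeq 𝒜 T p ls us) : ∀ t ≤ T, 0 < ls t := by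
  intro t
  induction t with
  | zero => exact fun _ => hg.pos_zero
  | succ t ih =>
    intro ht
    exact ((hg.best t ht).pos_and_eq_two_sub h𝒜 (ih (by omega)) (hg.le t (by omega))
      (hg.le (t + 1) ht) (hg.image_eq ht)).1

theorem us_eq (h𝒜 : DilationClosed 𝒜) (hg : IsGreedySeq 𝒜 T p ls us) {t : ℕ} (ht₀ : 0 < t)
    (ht : t ≤ T) : us t = 2 - ls t := by
  obtain ⟨t, rfl⟩ := Nat.exists_eq_add_one_of_ne_zero ht₀.ne'
  exact ((hg.best t ht).pos_and_eq_two_sub h𝒜 (hg.pos h𝒜 t (by omega)) (hg.le t (by omega))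
    (hg.le (t + 1) ht) (hg.image_eq ht)).2

theorem le_one (h𝒜 : DilationClosed 𝒜) (hg : IsGreedySeq 𝒜 T p ls us) (hT : 0 < T) :
    ls T ≤ 1 := by
  linarith [hg.le T le_rfl, hg.us_eq h𝒜 hT le_rfl]

theorem image_polyCompEval (hg : IsGreedySeq 𝒜 T p ls us) :
    ∀ t ≤ T, polyCompEval p t '' Icc (ls 0) (us 0) = Icc (ls t) (us t) := by
  intro t
  induction t with
  | zero => exact fun _ => image_id _
  | succ t ih =>
    intro ht
    rw [image_polyCompEval_succ, ih (by omega), hg.image_eq ht]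

theorem exists_mul_mem_image_polyCompEval (h𝒜 : DilationClosed 𝒜) (hg : IsGreedySeq 𝒜 T p ls us)
    {r : ℕ → ℝ[X]} (hr : ∀ t < T, r t ∈ 𝒜) :
    ∀ t ≤ T, ∃ s, ∀ x ∈ Icc (ls t) (us t), s * x ∈ polyCompEval r t '' Icc (ls 0) (us 0) := by
  intro t
  induction t with
  | zero => exact fun _ => ⟨1, fun x hx => ⟨x, hx, (one_mul x).symm⟩⟩
  | succ t ih =>
    intro ht
    have htT : t < T := ht
    obtain ⟨s, hs⟩ := ih htT.le
    rw [image_polyCompEval_succ]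
    exact (hg.best t htT).exists_mul_mem_image h𝒜 (hg.pos h𝒜 t htT.le) (hg.le t htT.le)
      (hg.le (t + 1) ht) (hg.image_eq htT) (hr t htT) hs

theorem sSup_image_polyCompEval (h𝒜 : DilationClosed 𝒜) (hg : IsGreedySeq 𝒜 T p ls us)
    (hT : 0 < T) :
    sSup ((fun x => |1 - polyCompEval p T x|) '' Icc (ls 0) (us 0)) = 1 - ls T := by
  rw [← image_image (fun y => |1 - y|) (polyCompEval p T), hg.image_polyCompEval T le_rfl,
    hg.us_eq h𝒜 hT le_rfl, sSup_image_abs_one_sub_Icc_two_sub (hg.le_one h𝒜 hT)]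

theorem le_sSup_image_polyCompEval (h𝒜 : DilationClosed 𝒜) (hg : IsGreedySeq 𝒜 T p ls us)
    (hT : 0 < T) {r : ℕ → ℝ[X]} (hr : ∀ t < T, r t ∈ 𝒜) :
    1 - ls T ≤ sSup ((fun x => |1 - polyCompEval r T x|) '' Icc (ls 0) (us 0)) := by
  obtain ⟨s, hs⟩ := hg.exists_mul_mem_image_polyCompEval h𝒜 hr T le_rfl
  rw [hg.us_eq h𝒜 hT le_rfl] at hs
  obtain ⟨_, ⟨x, hx, rfl⟩, hy⟩ :=
    exists_le_abs_one_sub_of_mul_mem (hg.pos h𝒜 T le_rfl).le (hg.le_one h𝒜 hT) hs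
  refine hy.trans (le_csSup (isCompact_Icc.image ?_).bddAbove (mem_image_of_mem _ hx))
  have := continuous_polyCompEval r T
  fun_prop

end IsGreedySeq

theorem stmt_5 (d T : ℕ) (hd : Odd d) (hT : 1 ≤ T)
    (ℓ u : ℝ) (hℓ : 0 < ℓ) (hlu : ℓ ≤ u)
    (p : ℕ → Polynomial ℝ) (ls us : ℕ → ℝ)
    (hl0 : ls 0 = ℓ) (hu0 : us 0 = u)
    (hclass : ∀ t < T, IsOddPoly (p t) ∧ (p t).natDegree ≤ d)
    (hopt : ∀ t < T, ∀ r : Polynomial ℝ, IsOddPoly r → r.natDegree ≤ d →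
      uniformErr (ls t) (us t) (p t) ≤ uniformErr (ls t) (us t) r)
    (hls : ∀ t < T, ls (t + 1) = sInf ((fun x => (p t).eval x) '' Set.Icc (ls t) (us t)))
    (hus : ∀ t < T, us (t + 1) = sSup ((fun x => (p t).eval x) '' Set.Icc (ls t) (us t))) :
    (∀ r : ℕ → Polynomial ℝ, (∀ t < T, IsOddPoly (r t) ∧ (r t).natDegree ≤ d) →
        sSup ((fun x => |1 - polyCompEval p T x|) '' Set.Icc ℓ u)
          ≤ sSup ((fun x => |1 - polyCompEval r T x|) '' Set.Icc ℓ u)) ∧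
      sSup ((fun x => |1 - polyCompEval p T x|) '' Set.Icc ℓ u) = 1 - ls T := by
  subst hl0 hu0
  have h𝒜 := dilationClosed_oddPolys hd.pos
  have hg : IsGreedySeq (oddPolys d) T p ls us :=
    ⟨hℓ, hlu, fun t ht => ⟨hclass t ht, fun r hr => hopt t ht r hr.1 hr.2⟩, hls, hus⟩
  have hgreedy := hg.sSup_image_polyCompEval h𝒜 hT
  exact ⟨fun r hr => hgreedy ▸ hg.le_sSup_image_polyCompEval h𝒜 hT hr, hgreedy⟩
end

section
/- Let 0 < ℓ ≤ u and let g be an odd-polynomial composition achieving the optimal uniform error on [ℓ,u] over T−1 steps, with image [ℓ_T, u_T] on [ℓ,u]. If f is any other composition of T−1 odd polynomials of degree ≤ d with image [a,b] on [ℓ,u], then a/b ≤ ℓ_T/u_T. -/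
/-! A composition whose values fill `[a, b]` is improved, in uniform distance to `1`, by scaling
its last factor with `2 / (a + b)`: the error becomes `(b - a) / (a + b)`. Applied to a competitor
`f`, optimality of `g` gives `1 - ℓ_T ≤ (b - a) / (a + b)`, which rearranges to
`a / b ≤ ℓ_T / (2 - ℓ_T)`. -/

open Polynomial Set Function

lemma IsOddPoly.smul {p : ℝ[X]} (hp : IsOddPoly p) (c : ℝ) : IsOddPoly (c • p) :=
  fun n hn => hp n (right_ne_zero_of_mul (by simpa only [coeff_smul, smul_eq_mul] using hn))

lemma polyCompEval_congr {p q : ℕ → ℝ[X]} {n : ℕ} (h : ∀ t < n, p t = q t) (x : ℝ) :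
    polyCompEval p n x = polyCompEval q n x := by
  induction n with
  | zero => rfl
  | succ m ih =>
    simp only [polyCompEval]
    rw [ih fun t ht => h t (Nat.lt_succ_of_lt ht), h m (Nat.lt_succ_self m)]

lemma polyCompEval_update_smul (p : ℕ → ℝ[X]) (n : ℕ) (c x : ℝ) :
    polyCompEval (update p n (c • p n)) (n + 1) x = c * polyCompEval p (n + 1) x := by
  have hprefix : polyCompEval (update p n (c • p n)) n x = polyCompEval p n x :=
    polyCompEval_congr (fun t ht => update_of_ne ht.ne _ _) x
  simp only [polyCompEval, update_self, hprefix, eval_smul, smul_eq_mul]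

lemma forall_isOddPoly_natDegree_le_update_smul {p : ℕ → ℝ[X]} {N d : ℕ}
    (hp : ∀ t < N, IsOddPoly (p t) ∧ (p t).natDegree ≤ d) (k : ℕ) (c : ℝ) :
    ∀ t < N, IsOddPoly (update p k (c • p k) t) ∧ (update p k (c • p k) t).natDegree ≤ d := by
  intro t ht
  rcases eq_or_ne t k with rfl | hne
  · rw [update_self]
    exact ⟨(hp t ht).1.smul c, (natDegree_smul_le c _).trans (hp t ht).2⟩
  · rw [update_of_ne hne]
    exact hp t ht

lemma isGreatest_abs_one_sub_mul_image_Icc {a b : ℝ} (hab : a ≤ b) (hpos : 0 < a + b) :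
    IsGreatest ((fun v => |1 - 2 / (a + b) * v|) '' Icc a b) ((b - a) / (a + b)) := by
  have hrepr : ∀ v, 1 - 2 / (a + b) * v = (a + b - 2 * v) / (a + b) := fun v => by
    field_simp
  refine ⟨⟨a, left_mem_Icc.2 hab, ?_⟩, ?_⟩
  · dsimp only
    rw [hrepr a, abs_of_nonneg (div_nonneg (by linarith) hpos.le)]
    ring
  · rintro _ ⟨v, ⟨hav, hvb⟩, rfl⟩
    dsimp only
    rw [hrepr v, abs_div, abs_of_pos hpos]
    gcongr
    exact abs_le.2 ⟨by linarith, by linarith⟩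

theorem stmt_6_general (d T : ℕ) (hT : 2 ≤ T)
    (ℓ u : ℝ)
    (g f : ℕ → Polynomial ℝ)
    (hf : ∀ t < T - 1, IsOddPoly (f t) ∧ (f t).natDegree ≤ d)
    (lT uT a b : ℝ) (ha : 0 < a) (hab : a ≤ b)
    (hfimg : (fun x => polyCompEval f (T - 1) x) '' Set.Icc ℓ u = Set.Icc a b)
    (hgopt : ∀ r : ℕ → Polynomial ℝ, (∀ t < T - 1, IsOddPoly (r t) ∧ (r t).natDegree ≤ d) →
      sSup ((fun x => |1 - polyCompEval g (T - 1) x|) '' Set.Icc ℓ u)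
        ≤ sSup ((fun x => |1 - polyCompEval r (T - 1) x|) '' Set.Icc ℓ u))
    (herr : sSup ((fun x => |1 - polyCompEval g (T - 1) x|) '' Set.Icc ℓ u) = 1 - lT)
    (huT : uT = 2 - lT) :
    a / b ≤ lT / uT := by
  obtain ⟨n, hn⟩ : ∃ n, T - 1 = n + 1 := ⟨T - 2, by omega⟩
  rw [hn] at hf hfimg hgopt herr
  have hpos : 0 < a + b := by linarith
  set r := update f n ((2 / (a + b)) • f n)
  have hr_img : (fun x => |1 - polyCompEval r (n + 1) x|) '' Icc ℓ u
      = (fun v => |1 - 2 / (a + b) * v|) '' Icc a b := by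
    simp only [r, polyCompEval_update_smul, ← hfimg, image_image]
  have hrescaled : 1 - lT ≤ (b - a) / (a + b) := by
    have := hgopt r (forall_isOddPoly_natDegree_le_update_smul hf n _)
    rwa [herr, hr_img, (isGreatest_abs_one_sub_mul_image_Icc hab hpos).csSup_eq] at this
  have hlT : lT ≤ 1 := by
    have : 0 ≤ 1 - lT := herr ▸ Real.sSup_nonneg (by rintro _ ⟨x, -, rfl⟩; exact abs_nonneg _)
    linarith
  rw [le_div_iff₀ hpos] at hrescaled
  rw [huT, div_le_div_iff₀ (by linarith) (by linarith)]
  nlinarith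

theorem stmt_6 (d T : ℕ) (hd : Odd d) (hT : 2 ≤ T)
    (ℓ u : ℝ) (hℓ : 0 < ℓ) (hlu : ℓ ≤ u)
    (g f : ℕ → Polynomial ℝ)
    (hg : ∀ t < T - 1, IsOddPoly (g t) ∧ (g t).natDegree ≤ d)
    (hf : ∀ t < T - 1, IsOddPoly (f t) ∧ (f t).natDegree ≤ d)
    (lT uT a b : ℝ) (hlT : 0 < lT) (ha : 0 < a) (hab : a ≤ b)
    (hgimg : (fun x => polyCompEval g (T - 1) x) '' Set.Icc ℓ u = Set.Icc lT uT)
    (hfimg : (fun x => polyCompEval f (T - 1) x) '' Set.Icc ℓ u = Set.Icc a b)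
    (hgopt : ∀ r : ℕ → Polynomial ℝ, (∀ t < T - 1, IsOddPoly (r t) ∧ (r t).natDegree ≤ d) →
      sSup ((fun x => |1 - polyCompEval g (T - 1) x|) '' Set.Icc ℓ u)
        ≤ sSup ((fun x => |1 - polyCompEval r (T - 1) x|) '' Set.Icc ℓ u))
    (herr : sSup ((fun x => |1 - polyCompEval g (T - 1) x|) '' Set.Icc ℓ u) = 1 - lT)
    (huT : uT = 2 - lT) :
    a / b ≤ lT / uT :=
  stmt_6_general d T hT ℓ u g f hf lT uT a b ha hab hfimg hgopt herr huT
end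

section
/- Let p_NS(x) = (3/2)x − (1/2)x³ and for 0 < ℓ ≤ u define α = sqrt(3/(u² + ℓu + ℓ²)) and β = 4/(2 + ℓu(ℓ+u)α³). Then the polynomial p(x) = β·p_NS(αx) satisfies the equioscillation conditions p(ℓ) = 1 − E, p(1/α) = 1 + E, p(u) = 1 − E where E = β − 1. -/
/-!
Because `α² (ℓ² + ℓu + u²) = 3`, the scaled cubic `x ↦ p_NS(αx)` takes the same value
`c = α³ ℓu(ℓ+u)/2` at `x = ℓ` and at `x = u`, while at the critical point it takes `p_NS(1) = 1`.
The normalisation `β = 4/(2 + 2c)` is exactly the one that puts `β c` and `β` symmetrically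
about `1`.
-/

/-- The Newton–Schulz cubic `p_NS`. -/
noncomputable def newtonSchulz (x : ℝ) : ℝ := 3 / 2 * x - 1 / 2 * x ^ 3

lemma newtonSchulz_one : newtonSchulz 1 = 1 := by
  norm_num [newtonSchulz]

lemma newtonSchulz_mul_eq_of_sq_mul_eq_three {α x y : ℝ}
    (h : α ^ 2 * (x ^ 2 + x * y + y ^ 2) = 3) :
    newtonSchulz (α * x) = x * y * (x + y) * α ^ 3 / 2 := by
  unfold newtonSchulz
  linear_combination (-(α * x) / 2) * h

lemma four_div_mul_half_sub_two {D : ℝ} (hD : D ≠ 0) : 4 / D * ((D - 2) / 2) = 2 - 4 / D := by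
  field_simp
  ring

lemma mul_newtonSchulz_eq_two_sub {α β x y : ℝ} (hD : 2 + x * y * (x + y) * α ^ 3 ≠ 0)
    (hβ : β = 4 / (2 + x * y * (x + y) * α ^ 3)) (h : α ^ 2 * (x ^ 2 + x * y + y ^ 2) = 3) :
    β * newtonSchulz (α * x) = 2 - β := by
  rw [newtonSchulz_mul_eq_of_sq_mul_eq_three h, hβ, ← four_div_mul_half_sub_two hD]
  ring

theorem stmt_9 (ℓ u : ℝ) (hℓ : 0 < ℓ) (hlu : ℓ ≤ u)
    (α β E : ℝ)
    (hα : α = Real.sqrt (3 / (u ^ 2 + ℓ * u + ℓ ^ 2)))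
    (hβ : β = 4 / (2 + ℓ * u * (ℓ + u) * α ^ 3))
    (hE : E = β - 1)
    (p : ℝ → ℝ)
    (hp : p = fun x => β * ((3 / 2) * (α * x) - (1 / 2) * (α * x) ^ 3)) :
    p ℓ = 1 - E ∧ p (1 / α) = 1 + E ∧ p u = 1 - E := by
  have hu : 0 < u := hℓ.trans_le hlu
  have hαpos : 0 < α := by rw [hα]; positivity
  have hα2 : α ^ 2 * (ℓ ^ 2 + ℓ * u + u ^ 2) = 3 := by
    rw [hα, Real.sq_sqrt (by positivity)]
    field_simp
    ring
  have hD : 2 + ℓ * u * (ℓ + u) * α ^ 3 ≠ 0 := by positivity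
  obtain rfl : p = fun x => β * newtonSchulz (α * x) := hp
  subst hE
  refine ⟨?_, ?_, ?_⟩
  · linarith [mul_newtonSchulz_eq_two_sub hD hβ hα2]
  · show β * newtonSchulz (α * (1 / α)) = 1 + (β - 1)
    rw [mul_one_div_cancel hαpos.ne', newtonSchulz_one]
    ring
  · have hDu : 2 + u * ℓ * (u + ℓ) * α ^ 3 ≠ 0 := by convert hD using 1; ring
    have hβu : β = 4 / (2 + u * ℓ * (u + ℓ) * α ^ 3) := by rw [hβ]; ring
    linarith [mul_newtonSchulz_eq_two_sub hDu hβu (by linear_combination hα2)]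
end

section
/- Let p*(x) be the composition of T optimal odd degree-(2q+1) polynomial updates for the interval [ℓ,1] (as in the greedy construction). Then for any matrix M with singular values in [ℓ,1], ‖polar(M) − p*(M)‖₂ ≤ (1 − ℓ²)^{(q+1)^T}. -/
open Matrix
open scoped Matrix.Norms.L2Operator

/-!
Along the greedy construction, `[ls t, us t] ⊆ [1 - e_t, 1 + e_t]` with
`e_t = (1 - ℓ) ^ (q + 1) ^ t`. Indeed `p t` maps `[ls t, us t]` onto `[ls (t + 1), us (t + 1)]`,
and by optimality its error there is at most that of an explicit odd polynomial `r` of degree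
`2q + 1` with `|1 - r| ≤ e ^ (q + 1)` on `[1 - e, 1 + e]`.

The polynomial `r` comes from the Padé iteration. Let `h` be the degree-`q` Taylor polynomial of
`(1 - s)^(-1/2)`. The residual `R(s) = 1 - (1 - s) h(s)²` has nonnegative coefficients, vanishes to
order `q + 1` and satisfies `R(1) = 1`, so `|R(s)| ≤ |s| ^ (q + 1)` on the unit disc. For
`y ∈ [1 - e, 1 + e]` there is an `s` with `|s| = e` and `|1 - s| = y`. Since `|h(s)|²` is a
polynomial in `cos (arg s)`, hence in `y²`, `r(y) := y |h(s)|² = |1 - R(s)|` is an odd polynomial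
in `y`, and it lies within `e ^ (q + 1)` of `1`.

In the singular basis the matrix error is the diagonal matrix of scalar errors, and
`1 - ℓ ≤ 1 - ℓ²`.
-/

open Polynomial Finset

theorem Ring.multichoose_add {R : Type*} [CommRing R] [BinomialRing R] (r s : R) (k : ℕ) :
    Ring.multichoose (r + s) k =
      ∑ ij ∈ antidiagonal k, Ring.multichoose r ij.1 * Ring.multichoose s ij.2 := by
  have h := Ring.add_choose_eq (r := -r) (s := -s) k (Commute.all _ _)
  rw [← neg_add, Ring.choose_neg'] at h
  have hsign : ∀ ij ∈ antidiagonal k,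
      Ring.choose (-r) ij.1 * Ring.choose (-s) ij.2 =
        Int.negOnePow k • (Ring.multichoose r ij.1 * Ring.multichoose s ij.2) := by
    intro ij hij
    rw [Ring.choose_neg', Ring.choose_neg', smul_mul_smul_comm, ← Int.negOnePow_add,
      ← Nat.cast_add, mem_antidiagonal.1 hij]
  rw [sum_congr rfl hsign, ← smul_sum] at h
  exact (MulAction.injective (Int.negOnePow k)) h

/-- The Taylor coefficients of `(1 - s)^(-1/2)`, equal to `(2k choose k) / 4^k`. -/
noncomputable def invSqrtCoeff (k : ℕ) : ℝ := Ring.multichoose (1 / 2 : ℝ) k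

theorem invSqrtCoeff_zero : invSqrtCoeff 0 = 1 := Ring.multichoose_zero_right _

theorem succ_mul_invSqrtCoeff_succ (k : ℕ) :
    (k + 1 : ℝ) * invSqrtCoeff (k + 1) = (k + 1 / 2) * invSqrtCoeff k := by
  have hfac : ∀ n, (n.factorial : ℝ) * invSqrtCoeff n = (ascPochhammer ℝ n).eval (1 / 2) := by
    intro n
    rw [← nsmul_eq_mul, invSqrtCoeff, Ring.factorial_nsmul_multichoose_eq_ascPochhammer,
      ascPochhammer_smeval_eq_eval]
  have h := hfac (k + 1)
  rw [ascPochhammer_succ_eval, ← hfac, Nat.factorial_succ] at h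
  push_cast at h
  have hk : (k.factorial : ℝ) ≠ 0 := by positivity
  apply mul_left_cancel₀ hk
  linear_combination h

theorem invSqrtCoeff_nonneg (k : ℕ) : 0 ≤ invSqrtCoeff k := by
  induction k with
  | zero => rw [invSqrtCoeff_zero]; exact zero_le_one
  | succ k ih => nlinarith [succ_mul_invSqrtCoeff_succ k]

theorem invSqrtCoeff_succ_le (k : ℕ) : invSqrtCoeff (k + 1) ≤ invSqrtCoeff k := by
  nlinarith [succ_mul_invSqrtCoeff_succ k, invSqrtCoeff_nonneg k, invSqrtCoeff_nonneg (k + 1)]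

theorem sum_antidiagonal_invSqrtCoeff_mul (k : ℕ) :
    ∑ ij ∈ antidiagonal k, invSqrtCoeff ij.1 * invSqrtCoeff ij.2 = 1 := by
  simp only [invSqrtCoeff]
  rw [← Ring.multichoose_add, add_halves, Ring.multichoose_one]

/-- The polynomial `h` of the Padé iteration `p(x) = x h(1 - x²)`. -/
noncomputable def invSqrtTaylor (q : ℕ) : ℝ[X] :=
  ∑ k ∈ range (q + 1), C (invSqrtCoeff k) * X ^ k

theorem coeff_invSqrtTaylor (q k : ℕ) :
    (invSqrtTaylor q).coeff k = if k ≤ q then invSqrtCoeff k else 0 := by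
  simp only [invSqrtTaylor, finsetSum_coeff, coeff_C_mul, coeff_X_pow, mul_ite, mul_one,
    mul_zero, sum_ite_eq, mem_range, Nat.lt_succ_iff]

theorem natDegree_invSqrtTaylor_le (q : ℕ) : (invSqrtTaylor q).natDegree ≤ q :=
  natDegree_sum_le_of_forall_le _ _ fun _ hk =>
    (natDegree_C_mul_X_pow_le _ _).trans (Nat.lt_succ_iff.1 (mem_range.1 hk))

theorem coeff_invSqrtTaylor_succ_le (q k : ℕ) :
    (invSqrtTaylor q).coeff (k + 1) ≤ (invSqrtTaylor q).coeff k := by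
  simp only [coeff_invSqrtTaylor]
  split_ifs with hk₁ hk₂ hk₂
  · exact invSqrtCoeff_succ_le k
  · omega
  · exact invSqrtCoeff_nonneg k
  · exact le_rfl

theorem coeff_invSqrtTaylor_sq_of_le {q j : ℕ} (hj : j ≤ q) :
    ((invSqrtTaylor q) ^ 2).coeff j = 1 := by
  rw [sq, coeff_mul, ← sum_antidiagonal_invSqrtCoeff_mul j]
  refine sum_congr rfl fun ij hij => ?_
  have := mem_antidiagonal.1 hij
  rw [coeff_invSqrtTaylor, coeff_invSqrtTaylor, if_pos (by omega), if_pos (by omega)]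

theorem coeff_invSqrtTaylor_sq_of_ge {q j : ℕ} (hj : q ≤ j) :
    ((invSqrtTaylor q) ^ 2).coeff j =
      ∑ k ∈ range (q + 1), invSqrtCoeff k * (invSqrtTaylor q).coeff (j - k) := by
  rw [sq]
  nth_rw 1 [invSqrtTaylor]
  simp only [sum_mul, finsetSum_coeff, mul_assoc, coeff_C_mul, coeff_X_pow_mul']
  refine sum_congr rfl fun k hk => ?_
  rw [if_pos (by simp only [mem_range] at hk; omega)]

theorem coeff_invSqrtTaylor_sq_succ_le {q j : ℕ} (hj : q ≤ j) :
    ((invSqrtTaylor q) ^ 2).coeff (j + 1) ≤ ((invSqrtTaylor q) ^ 2).coeff j := by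
  rw [coeff_invSqrtTaylor_sq_of_ge hj, coeff_invSqrtTaylor_sq_of_ge (by omega)]
  refine sum_le_sum fun k hk => mul_le_mul_of_nonneg_left ?_ (invSqrtCoeff_nonneg k)
  rw [show j + 1 - k = j - k + 1 by simp only [mem_range] at hk; omega]
  exact coeff_invSqrtTaylor_succ_le q _

/-- `1 - p(x)²` for the Padé iteration `p`, as a function of `s = 1 - x²`. -/
noncomputable def invSqrtResidual (q : ℕ) : ℝ[X] := 1 - (1 - X) * (invSqrtTaylor q) ^ 2

theorem coeff_invSqrtResidual_zero (q : ℕ) : (invSqrtResidual q).coeff 0 = 0 := by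
  rw [invSqrtResidual, coeff_sub, mul_coeff_zero, coeff_invSqrtTaylor_sq_of_le (Nat.zero_le q)]
  simp

theorem coeff_invSqrtResidual_succ (q j : ℕ) :
    (invSqrtResidual q).coeff (j + 1) =
      ((invSqrtTaylor q) ^ 2).coeff j - ((invSqrtTaylor q) ^ 2).coeff (j + 1) := by
  rw [invSqrtResidual, sub_mul, one_mul, sub_sub_eq_add_sub, coeff_sub, coeff_add, coeff_X_mul,
    coeff_one, if_neg (Nat.succ_ne_zero j), zero_add]

theorem coeff_invSqrtResidual_nonneg (q j : ℕ) : 0 ≤ (invSqrtResidual q).coeff j := by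
  rcases j with _ | j
  · rw [coeff_invSqrtResidual_zero]
  rw [coeff_invSqrtResidual_succ, sub_nonneg]
  rcases le_or_gt (j + 1) q with h | h
  · rw [coeff_invSqrtTaylor_sq_of_le h, coeff_invSqrtTaylor_sq_of_le (by omega)]
  · exact coeff_invSqrtTaylor_sq_succ_le (by omega)

theorem coeff_invSqrtResidual_of_le {q j : ℕ} (hj : j ≤ q) :
    (invSqrtResidual q).coeff j = 0 := by
  rcases j with _ | j
  · exact coeff_invSqrtResidual_zero q
  rw [coeff_invSqrtResidual_succ, coeff_invSqrtTaylor_sq_of_le hj,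
    coeff_invSqrtTaylor_sq_of_le (by omega), sub_self]

theorem eval_one_invSqrtResidual (q : ℕ) : (invSqrtResidual q).eval 1 = 1 := by
  simp [invSqrtResidual]

theorem norm_aeval_le_eval_one_mul_pow {P : ℝ[X]} {q : ℕ} (hnonneg : ∀ j, 0 ≤ P.coeff j)
    (hlow : ∀ j ≤ q, P.coeff j = 0) {s : ℂ} (hs : ‖s‖ ≤ 1) :
    ‖aeval s P‖ ≤ P.eval 1 * ‖s‖ ^ (q + 1) := by
  rw [aeval_eq_sum_range, eval_eq_sum_range, sum_mul]
  refine (norm_sum_le _ _).trans (sum_le_sum fun j _ => ?_)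
  rw [norm_smul, norm_pow, Real.norm_of_nonneg (hnonneg j), one_pow, mul_one]
  rcases le_or_gt j q with hj | hj
  · simp [hlow j hj]
  · exact mul_le_mul_of_nonneg_left (pow_le_pow_of_le_one (norm_nonneg s) hs hj) (hnonneg j)

theorem norm_aeval_invSqrtResidual_le (q : ℕ) {s : ℂ} (hs : ‖s‖ ≤ 1) :
    ‖aeval s (invSqrtResidual q)‖ ≤ ‖s‖ ^ (q + 1) := by
  simpa [eval_one_invSqrtResidual] using
    norm_aeval_le_eval_one_mul_pow (coeff_invSqrtResidual_nonneg q)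
      (fun j hj => coeff_invSqrtResidual_of_le hj) hs

section

open Complex

theorem normSq_aeval_mul_exp (P : ℝ[X]) (r θ : ℝ) :
    normSq (aeval (r * exp (θ * I)) P) =
      ∑ k ∈ range (P.natDegree + 1), ∑ l ∈ range (P.natDegree + 1),
        P.coeff k * P.coeff l * r ^ (k + l) * Real.cos ((k - l : ℝ) * θ) := by
  have hz : aeval ((r : ℂ) * exp (θ * I)) P =
      ∑ k ∈ range (P.natDegree + 1), ((P.coeff k * r ^ k : ℝ) : ℂ) * exp ((k * θ : ℝ) * I) := by
    rw [aeval_eq_sum_range]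
    refine sum_congr rfl fun k _ => ?_
    rw [Algebra.smul_def, mul_pow, ← Complex.exp_nat_mul, Complex.coe_algebraMap]
    push_cast
    ring_nf
  have hre : normSq (aeval ((r : ℂ) * exp (θ * I)) P) =
      (aeval ((r : ℂ) * exp (θ * I)) P * (starRingEnd ℂ) (aeval ((r : ℂ) * exp (θ * I)) P)).re := by
    rw [mul_conj, ofReal_re]
  rw [hre, hz, map_sum, sum_mul_sum, re_sum]
  refine sum_congr rfl fun k _ => ?_
  rw [re_sum]
  refine sum_congr rfl fun l _ => ?_
  have hterm : ((P.coeff k * r ^ k : ℝ) : ℂ) * exp ((k * θ : ℝ) * I) *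
      (starRingEnd ℂ) (((P.coeff l * r ^ l : ℝ) : ℂ) * exp ((l * θ : ℝ) * I)) =
        ((P.coeff k * P.coeff l * r ^ (k + l) : ℝ) : ℂ) * exp (((k - l : ℝ) * θ : ℝ) * I) := by
    rw [map_mul, conj_ofReal, ← exp_conj, map_mul, conj_ofReal, conj_I, mul_mul_mul_comm,
      ← exp_add]
    push_cast
    ring_nf
  rw [hterm, re_ofReal_mul, exp_ofReal_mul_I_re]

noncomputable def normSqCosPoly (P : ℝ[X]) (r : ℝ) : ℝ[X] :=
  ∑ k ∈ range (P.natDegree + 1), ∑ l ∈ range (P.natDegree + 1),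
    C (P.coeff k * P.coeff l * r ^ (k + l)) * Chebyshev.T ℝ ((k : ℤ) - l)

theorem eval_cos_normSqCosPoly (P : ℝ[X]) (r θ : ℝ) :
    (normSqCosPoly P r).eval (Real.cos θ) = normSq (aeval (r * exp (θ * I)) P) := by
  rw [normSq_aeval_mul_exp, normSqCosPoly, eval_finsetSum]
  refine sum_congr rfl fun k _ => ?_
  rw [eval_finsetSum]
  refine sum_congr rfl fun l _ => ?_
  rw [eval_mul, eval_C, Chebyshev.T_real_cos]
  push_cast
  rfl

theorem natDegree_normSqCosPoly_le (P : ℝ[X]) (r : ℝ) :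
    (normSqCosPoly P r).natDegree ≤ P.natDegree := by
  refine natDegree_sum_le_of_forall_le _ _ fun k hk =>
    natDegree_sum_le_of_forall_le _ _ fun l hl => ?_
  refine (natDegree_C_mul_le _ _).trans ?_
  rw [Chebyshev.natDegree_T]
  simp only [mem_range] at hk hl
  omega

theorem isOddPoly_X_mul_expand_two (Q : ℝ[X]) : IsOddPoly (X * expand ℝ 2 Q) := by
  rintro (_ | n) hn
  · simp at hn
  rw [coeff_X_mul, coeff_expand two_pos] at hn
  obtain ⟨k, rfl⟩ : 2 ∣ n := by by_contra h; exact hn (if_neg h)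
  exact ⟨k, by ring⟩

/-- At `y`, with `s = ε e^{iθ}` and `cos θ = (1 + ε² - y²) / (2ε)`, so that `|1 - s| = y`, this
is `|1 - s| |h(s)|²`. -/
noncomputable def oddApproxOne (q : ℕ) (ε : ℝ) : ℝ[X] :=
  X * expand ℝ 2
    ((normSqCosPoly (invSqrtTaylor q) ε).comp (C ((1 + ε ^ 2) / (2 * ε)) - C (2 * ε)⁻¹ * X))

theorem natDegree_oddApproxOne_le (q : ℕ) (ε : ℝ) :
    (oddApproxOne q ε).natDegree ≤ 2 * q + 1 := by
  have hlin : (C ((1 + ε ^ 2) / (2 * ε)) - C (2 * ε)⁻¹ * X).natDegree ≤ 1 :=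
    (natDegree_sub_le _ _).trans (max_le ((natDegree_C _).trans_le zero_le_one)
      ((natDegree_C_mul_le _ _).trans natDegree_X_le))
  have hcomp := (natDegree_comp_le (p := normSqCosPoly (invSqrtTaylor q) ε)).trans
    (Nat.mul_le_mul ((natDegree_normSqCosPoly_le _ _).trans (natDegree_invSqrtTaylor_le q)) hlin)
  refine (natDegree_mul_le).trans ?_
  rw [natDegree_X, natDegree_expand]
  omega

theorem normSq_one_sub_mul_exp (r θ : ℝ) :
    normSq (1 - r * exp (θ * I)) = 1 - 2 * r * Real.cos θ + r ^ 2 := by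
  rw [normSq_apply]
  simp only [sub_re, sub_im, one_re, one_im, re_ofReal_mul, im_ofReal_mul, exp_ofReal_mul_I_re,
    exp_ofReal_mul_I_im]
  nlinarith [Real.sin_sq_add_cos_sq θ]

theorem abs_one_sub_eval_oddApproxOne_le (q : ℕ) {ε y : ℝ} (hε : 0 < ε) (hε1 : ε ≤ 1)
    (hy : y ∈ Set.Icc (1 - ε) (1 + ε)) : |1 - (oddApproxOne q ε).eval y| ≤ ε ^ (q + 1) := by
  obtain ⟨hy1, hy2⟩ := hy
  set w := (1 + ε ^ 2 - y ^ 2) / (2 * ε) with hw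
  have hcos : Real.cos (Real.arccos w) = w := by
    refine Real.cos_arccos ?_ ?_
    · rw [hw, le_div_iff₀ (by positivity)]; nlinarith
    · rw [hw, div_le_one (by positivity)]; nlinarith
  set s : ℂ := ε * exp (Real.arccos w * I)
  have hs : ‖s‖ = ε := by simp [s, norm_exp_ofReal_mul_I, hε.le]
  have h1s : ‖1 - s‖ = y := by
    rw [← sq_eq_sq₀ (norm_nonneg _) (by linarith), ← normSq_eq_norm_sq,
      normSq_one_sub_mul_exp, hcos, hw]
    field_simp
    ring
  have heval : (oddApproxOne q ε).eval y = ‖1 - aeval s (invSqrtResidual q)‖ := by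
    have hw' : (1 + ε ^ 2) / (2 * ε) - (2 * ε)⁻¹ * y ^ 2 = Real.cos (Real.arccos w) := by
      rw [hcos, hw]; field_simp
    simp only [oddApproxOne, eval_mul, eval_X, expand_eval, eval_comp, eval_sub, eval_C, hw',
      eval_cos_normSqCosPoly, invSqrtResidual, map_sub, map_one, map_mul,
      map_pow, aeval_X, sub_sub_cancel, norm_mul, norm_pow, h1s, normSq_eq_norm_sq]
    rfl
  rw [heval]
  calc |1 - ‖1 - aeval s (invSqrtResidual q)‖|
      = |‖(1 : ℂ)‖ - ‖1 - aeval s (invSqrtResidual q)‖| := by rw [norm_one]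
    _ ≤ ‖1 - (1 - aeval s (invSqrtResidual q))‖ := abs_norm_sub_norm_le _ _
    _ ≤ ε ^ (q + 1) := by
      rw [sub_sub_cancel, ← hs]
      exact norm_aeval_invSqrtResidual_le q (hs.trans_le hε1)

end

theorem exists_isOddPoly_abs_one_sub_eval_le (q : ℕ) {ε : ℝ} (hε0 : 0 ≤ ε) (hε1 : ε ≤ 1) :
    ∃ r : ℝ[X], IsOddPoly r ∧ r.natDegree ≤ 2 * q + 1 ∧
      ∀ y ∈ Set.Icc (1 - ε) (1 + ε), |1 - r.eval y| ≤ ε ^ (q + 1) := by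
  rcases hε0.eq_or_lt with rfl | hε
  · refine ⟨X, fun n hn => ?_, by rw [natDegree_X]; omega, fun y hy => ?_⟩
    · rw [coeff_X] at hn
      split_ifs at hn with h
      · exact h ▸ odd_one
      · exact absurd rfl hn
    · obtain rfl : y = 1 := by simp only [sub_zero, add_zero, Set.Icc_self] at hy; exact hy
      simp
  · exact ⟨_, isOddPoly_X_mul_expand_two _, natDegree_oddApproxOne_le q ε,
      fun y hy => abs_one_sub_eval_oddApproxOne_le q hε hε1 hy⟩

theorem abs_one_sub_eval_le_uniformErr (P : ℝ[X]) {a b x : ℝ} (hx : x ∈ Set.Icc a b) :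
    |1 - P.eval x| ≤ uniformErr a b P :=
  le_csSup (isCompact_Icc.image (by fun_prop)).bddAbove (Set.mem_image_of_mem _ hx)

theorem uniformErr_le {P : ℝ[X]} {a b B : ℝ} (hB : 0 ≤ B)
    (h : ∀ x ∈ Set.Icc a b, |1 - P.eval x| ≤ B) : uniformErr a b P ≤ B :=
  Real.sSup_le (by rintro _ ⟨x, hx, rfl⟩; exact h x hx) hB

theorem uniformErr_le_pow_of_optimal {q : ℕ} {P : ℝ[X]} {a b e : ℝ}
    (hopt : ∀ r : ℝ[X], IsOddPoly r → r.natDegree ≤ 2 * q + 1 →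
      uniformErr a b P ≤ uniformErr a b r)
    (he0 : 0 ≤ e) (he1 : e ≤ 1) (hsub : Set.Icc a b ⊆ Set.Icc (1 - e) (1 + e)) :
    uniformErr a b P ≤ e ^ (q + 1) := by
  obtain ⟨r, hodd, hdeg, hr⟩ := exists_isOddPoly_abs_one_sub_eval_le q he0 he1
  exact (hopt r hodd hdeg).trans (uniformErr_le (by positivity) fun x hx => hr x (hsub hx))

theorem Icc_sInf_sSup_image_subset {P : ℝ[X]} {a b B : ℝ} (hab : a ≤ b)
    (hP : uniformErr a b P ≤ B) :
    Set.Icc (sInf ((fun x => P.eval x) '' Set.Icc a b)) (sSup ((fun x => P.eval x) '' Set.Icc a b))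
      ⊆ Set.Icc (1 - B) (1 + B) := by
  have hne : ((fun x => P.eval x) '' Set.Icc a b).Nonempty := (Set.nonempty_Icc.2 hab).image _
  have hbound : ∀ v ∈ (fun x => P.eval x) '' Set.Icc a b, |1 - v| ≤ B := by
    rintro _ ⟨x, hx, rfl⟩
    exact (abs_one_sub_eval_le_uniformErr P hx).trans hP
  exact Set.Icc_subset_Icc (le_csInf hne fun v hv => (Set.mem_Icc_iff_abs_le.1 (hbound v hv)).1)
    (csSup_le hne fun v hv => (Set.mem_Icc_iff_abs_le.1 (hbound v hv)).2)

section Greedy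

variable {q T : ℕ} {p : ℕ → ℝ[X]} {ls us : ℕ → ℝ}

theorem polyCompEval_mem_Icc
    (hls : ∀ t < T, ls (t + 1) = sInf ((fun x => (p t).eval x) '' Set.Icc (ls t) (us t)))
    (hus : ∀ t < T, us (t + 1) = sSup ((fun x => (p t).eval x) '' Set.Icc (ls t) (us t)))
    {x : ℝ} (hx : x ∈ Set.Icc (ls 0) (us 0)) :
    ∀ t ≤ T, polyCompEval p t x ∈ Set.Icc (ls t) (us t)
  | 0, _ => hx
  | t + 1, ht => by
    have hcpt := (isCompact_Icc (a := ls t) (b := us t)).image (f := fun x => (p t).eval x)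
      (by fun_prop)
    have hmem := Set.mem_image_of_mem (fun x => (p t).eval x)
      (polyCompEval_mem_Icc hls hus hx t (by omega))
    rw [polyCompEval, hls t ht, hus t ht]
    exact ⟨csInf_le hcpt.bddBelow hmem, le_csSup hcpt.bddAbove hmem⟩

theorem Icc_subset_Icc_pow_of_optimal
    (hls : ∀ t < T, ls (t + 1) = sInf ((fun x => (p t).eval x) '' Set.Icc (ls t) (us t)))
    (hus : ∀ t < T, us (t + 1) = sSup ((fun x => (p t).eval x) '' Set.Icc (ls t) (us t)))
    (hopt : ∀ t < T, ∀ r : ℝ[X], IsOddPoly r → r.natDegree ≤ 2 * q + 1 →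
      uniformErr (ls t) (us t) (p t) ≤ uniformErr (ls t) (us t) r)
    {e : ℝ} (he0 : 0 ≤ e) (he1 : e ≤ 1) (hne : ls 0 ≤ us 0)
    (h0 : Set.Icc (ls 0) (us 0) ⊆ Set.Icc (1 - e) (1 + e)) :
    ∀ t ≤ T, Set.Icc (ls t) (us t) ⊆ Set.Icc (1 - e ^ ((q + 1) ^ t)) (1 + e ^ ((q + 1) ^ t))
  | 0, _ => by simpa using h0
  | t + 1, ht => by
    have hab := polyCompEval_mem_Icc hls hus (Set.left_mem_Icc.2 hne) t (by omega)
    have herr := uniformErr_le_pow_of_optimal (hopt t ht) (by positivity)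
      (pow_le_one₀ he0 he1)
      (Icc_subset_Icc_pow_of_optimal hls hus hopt he0 he1 hne h0 t (by omega))
    rw [← pow_mul, ← pow_succ] at herr
    rw [hls t ht, hus t ht]
    exact Icc_sInf_sSup_image_subset (hab.1.trans hab.2) herr

theorem abs_one_sub_polyCompEval_le
    (hls : ∀ t < T, ls (t + 1) = sInf ((fun x => (p t).eval x) '' Set.Icc (ls t) (us t)))
    (hus : ∀ t < T, us (t + 1) = sSup ((fun x => (p t).eval x) '' Set.Icc (ls t) (us t)))
    (hopt : ∀ t < T, ∀ r : ℝ[X], IsOddPoly r → r.natDegree ≤ 2 * q + 1 →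
      uniformErr (ls t) (us t) (p t) ≤ uniformErr (ls t) (us t) r)
    {ℓ : ℝ} (hℓ0 : 0 ≤ ℓ) (hℓ1 : ℓ ≤ 1) (hl0 : ls 0 = ℓ) (hu0 : us 0 = 1)
    {x : ℝ} (hx : x ∈ Set.Icc ℓ 1) : |1 - polyCompEval p T x| ≤ (1 - ℓ) ^ ((q + 1) ^ T) := by
  rw [← hl0, ← hu0] at hx hℓ1
  have h0 : Set.Icc (ls 0) (us 0) ⊆ Set.Icc (1 - (1 - ℓ)) (1 + (1 - ℓ)) := by
    rw [hl0, hu0]; exact Set.Icc_subset_Icc (by linarith) (by linarith)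
  exact Set.mem_Icc_iff_abs_le.2 <| Icc_subset_Icc_pow_of_optimal hls hus hopt (by linarith)
    (by linarith) hℓ1 h0 T le_rfl (polyCompEval_mem_Icc hls hus hx T le_rfl)

end Greedy

theorem Matrix.l2_opNorm_le_one_of_conjTranspose_mul_self_eq_one {𝕜 m n : Type*} [RCLike 𝕜]
    [Fintype m] [Fintype n] [DecidableEq n] {U : Matrix m n 𝕜} (hU : Uᴴ * U = 1) : ‖U‖ ≤ 1 := by
  have h1 : ‖(1 : Matrix n n 𝕜)‖ ≤ 1 := by
    rw [← diagonal_one, l2_opNorm_diagonal]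
    exact pi_norm_le_iff_of_nonneg zero_le_one |>.2 fun _ => norm_one.le
  have h := l2_opNorm_conjTranspose_mul_self U
  rw [hU] at h
  nlinarith [norm_nonneg U]

theorem Matrix.l2_opNorm_mul_mul_conjTranspose_le {𝕜 m n k : Type*} [RCLike 𝕜]
    [Fintype m] [Fintype n] [Fintype k] [DecidableEq n] [DecidableEq k]
    {U : Matrix m n 𝕜} {V : Matrix k n 𝕜} (hU : Uᴴ * U = 1) (hV : Vᴴ * V = 1)
    (D : Matrix n n 𝕜) : ‖U * D * Vᴴ‖ ≤ ‖D‖ := by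
  have hU1 := l2_opNorm_le_one_of_conjTranspose_mul_self_eq_one hU
  have hV1 := l2_opNorm_le_one_of_conjTranspose_mul_self_eq_one hV
  rw [← l2_opNorm_conjTranspose V] at hV1
  calc ‖U * D * Vᴴ‖ ≤ ‖U‖ * ‖D‖ * ‖Vᴴ‖ :=
        (l2_opNorm_mul _ _).trans (mul_le_mul_of_nonneg_right (l2_opNorm_mul _ _) (norm_nonneg _))
    _ ≤ 1 * ‖D‖ * 1 := by gcongr
    _ = ‖D‖ := by ring

theorem stmt_13_general (q T : ℕ)
    (ℓ : ℝ) (hℓ : 0 < ℓ) (hℓ1 : ℓ ≤ 1)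
    (p : ℕ → Polynomial ℝ) (ls us : ℕ → ℝ)
    (hl0 : ls 0 = ℓ) (hu0 : us 0 = 1)
    (hopt : ∀ t < T, ∀ r : Polynomial ℝ, IsOddPoly r → r.natDegree ≤ 2 * q + 1 →
      uniformErr (ls t) (us t) (p t) ≤ uniformErr (ls t) (us t) r)
    (hls : ∀ t < T, ls (t + 1) = sInf ((fun x => (p t).eval x) '' Set.Icc (ls t) (us t)))
    (hus : ∀ t < T, us (t + 1) = sSup ((fun x => (p t).eval x) '' Set.Icc (ls t) (us t)))
    (m n : ℕ)
    (U : Matrix (Fin m) (Fin n) ℝ) (V : Matrix (Fin n) (Fin n) ℝ) (σ : Fin n → ℝ)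
    (hU : Uᵀ * U = 1) (hV : Vᵀ * V = 1) (hσ : ∀ i, σ i ∈ Set.Icc ℓ 1) :
    ‖U * Vᵀ - U * Matrix.diagonal (fun i => polyCompEval p T (σ i)) * Vᵀ‖
      ≤ (1 - ℓ ^ 2) ^ ((q + 1) ^ T) := by
  have hscalar (i : Fin n) : |1 - polyCompEval p T (σ i)| ≤ (1 - ℓ ^ 2) ^ ((q + 1) ^ T) :=
    (abs_one_sub_polyCompEval_le hls hus hopt hℓ.le hℓ1 hl0 hu0 (hσ i)).trans
      (pow_le_pow_left₀ (by linarith) (by nlinarith) _)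
  have hdiff : U * Vᵀ - U * diagonal (fun i => polyCompEval p T (σ i)) * Vᵀ =
      U * diagonal (fun i => 1 - polyCompEval p T (σ i)) * Vᴴ := by
    have hD : diagonal (fun i => 1 - polyCompEval p T (σ i)) =
        1 - diagonal (fun i => polyCompEval p T (σ i)) := by
      rw [← diagonal_one, diagonal_sub]
    rw [hD, Matrix.mul_sub, Matrix.mul_one, Matrix.sub_mul, conjTranspose_eq_transpose_of_trivial]
  rw [hdiff]
  calc _ ≤ ‖diagonal (fun i => 1 - polyCompEval p T (σ i))‖ :=
        l2_opNorm_mul_mul_conjTranspose_le (by rwa [conjTranspose_eq_transpose_of_trivial])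
          (by rwa [conjTranspose_eq_transpose_of_trivial]) _
    _ = ‖fun i => 1 - polyCompEval p T (σ i)‖ := l2_opNorm_diagonal _
    _ ≤ _ := pi_norm_le_iff_of_nonneg (pow_nonneg (by nlinarith) _) |>.2 fun i => by
        rw [Real.norm_eq_abs]; exact hscalar i

theorem stmt_13 (q T : ℕ) (hq : 1 ≤ q) (hT : 1 ≤ T)
    (ℓ : ℝ) (hℓ : 0 < ℓ) (hℓ1 : ℓ ≤ 1)
    (p : ℕ → Polynomial ℝ) (ls us : ℕ → ℝ)
    (hl0 : ls 0 = ℓ) (hu0 : us 0 = 1)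
    (hclass : ∀ t < T, IsOddPoly (p t) ∧ (p t).natDegree ≤ 2 * q + 1)
    (hopt : ∀ t < T, ∀ r : Polynomial ℝ, IsOddPoly r → r.natDegree ≤ 2 * q + 1 →
      uniformErr (ls t) (us t) (p t) ≤ uniformErr (ls t) (us t) r)
    (hls : ∀ t < T, ls (t + 1) = sInf ((fun x => (p t).eval x) '' Set.Icc (ls t) (us t)))
    (hus : ∀ t < T, us (t + 1) = sSup ((fun x => (p t).eval x) '' Set.Icc (ls t) (us t)))
    (m n : ℕ)
    (M : Matrix (Fin m) (Fin n) ℝ)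
    (U : Matrix (Fin m) (Fin n) ℝ) (V : Matrix (Fin n) (Fin n) ℝ) (σ : Fin n → ℝ)
    (hU : Uᵀ * U = 1) (hV : Vᵀ * V = 1) (hσ : ∀ i, σ i ∈ Set.Icc ℓ 1)
    (hM : M = U * Matrix.diagonal σ * Vᵀ) :
    ‖U * Vᵀ - U * Matrix.diagonal (fun i => polyCompEval p T (σ i)) * Vᵀ‖
      ≤ (1 - ℓ ^ 2) ^ ((q + 1) ^ T) :=
  stmt_13_general q T ℓ hℓ hℓ1 p ls us hl0 hu0 hopt hls hus m n U V σ hU hV hσ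
end

section
/- For the degree-5 Newton-Schulz polynomial p(x) = (15x − 10x³ + 3x⁵)/8 and x ∈ [ℓ,1] with 0 < ℓ ≤ 1, we have 0 ≤ 1 − p(x) ≤ (1 − x²)³ ≤ (1 − ℓ²)³. -/
/-!
Both inequalities come from factoring out the triple zero at `x = 1`:
`8 (1 - p x) = (1 - x)³ (3x² + 9x + 8)` and
`8 ((1 - x²)³ - (1 - p x)) = x (1 - x)³ (8x² + 21x + 15)`,
where the quadratic cofactors are positive on `[0, 1]`.
-/

noncomputable def newtonSchulz5 (x : ℝ) : ℝ := (15 * x - 10 * x ^ 3 + 3 * x ^ 5) / 8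

lemma one_sub_newtonSchulz5 (x : ℝ) :
    1 - newtonSchulz5 x = (1 - x) ^ 3 * (3 * x ^ 2 + 9 * x + 8) / 8 := by
  unfold newtonSchulz5; ring

lemma one_sub_sq_pow_three_sub_one_sub_newtonSchulz5 (x : ℝ) :
    (1 - x ^ 2) ^ 3 - (1 - newtonSchulz5 x) = x * (1 - x) ^ 3 * (8 * x ^ 2 + 21 * x + 15) / 8 := by
  unfold newtonSchulz5; ring

lemma newtonSchulz5_le_one {x : ℝ} (hx : x ≤ 1) : newtonSchulz5 x ≤ 1 := by
  have hcofactor : 0 ≤ 3 * x ^ 2 + 9 * x + 8 := by nlinarith [sq_nonneg (2 * x + 3)]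
  have : 0 ≤ 1 - newtonSchulz5 x := by
    rw [one_sub_newtonSchulz5]
    have : 0 ≤ 1 - x := sub_nonneg.2 hx
    positivity
  linarith

lemma one_sub_newtonSchulz5_le {x : ℝ} (hx₀ : 0 ≤ x) (hx₁ : x ≤ 1) :
    1 - newtonSchulz5 x ≤ (1 - x ^ 2) ^ 3 := by
  have : 0 ≤ (1 - x ^ 2) ^ 3 - (1 - newtonSchulz5 x) := by
    rw [one_sub_sq_pow_three_sub_one_sub_newtonSchulz5]
    have : 0 ≤ 1 - x := sub_nonneg.2 hx₁
    positivity
  linarith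

theorem stmt_14_general (ℓ x : ℝ) (hℓ : 0 < ℓ) (hx : x ∈ Set.Icc ℓ 1) :
    0 ≤ 1 - (15 * x - 10 * x ^ 3 + 3 * x ^ 5) / 8 ∧
      1 - (15 * x - 10 * x ^ 3 + 3 * x ^ 5) / 8 ≤ (1 - x ^ 2) ^ 3 ∧
      (1 - x ^ 2) ^ 3 ≤ (1 - ℓ ^ 2) ^ 3 := by
  obtain ⟨hℓx, hx₁⟩ := hx
  have hx₀ : 0 ≤ x := hℓ.le.trans hℓx
  have hsq : 1 - x ^ 2 ≤ 1 - ℓ ^ 2 := sub_le_sub_left (pow_le_pow_left₀ hℓ.le hℓx 2) 1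
  exact ⟨sub_nonneg.2 (newtonSchulz5_le_one hx₁), one_sub_newtonSchulz5_le hx₀ hx₁,
    pow_le_pow_left₀ (sub_nonneg.2 (pow_le_one₀ hx₀ hx₁)) hsq 3⟩

theorem stmt_14 (ℓ x : ℝ) (hℓ : 0 < ℓ) (hℓ1 : ℓ ≤ 1) (hx : x ∈ Set.Icc ℓ 1) :
    0 ≤ 1 - (15 * x - 10 * x ^ 3 + 3 * x ^ 5) / 8 ∧
      1 - (15 * x - 10 * x ^ 3 + 3 * x ^ 5) / 8 ≤ (1 - x ^ 2) ^ 3 ∧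
      (1 - x ^ 2) ^ 3 ≤ (1 - ℓ ^ 2) ^ 3 :=
  stmt_14_general ℓ x hℓ hx
end
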